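/- Let n ≥ 2 be an integer and r > 0 a real number; for ν ∈ ℕ set λ̄_ν := ν(ν + n − 2)/r², ξ_ν := 1/(8r²) + (1/(64r⁴) + λ̄_ν/(4r²))^{1/2} and η_ν := −1/(8r²) + (1/(64r⁴) + λ̄_ν/(4r²))^{1/2}. Then there exists ν₀ ∈ ℕ such that for all ν ≥ ν₀, (λ̄_{ν+1} − η_{ν+1}) − (λ̄_ν + ξ_ν) ≥ (1/3)(λ̄_{ν+1} − λ̄_ν); in particular the open interval I_ν := (λ̄_ν + ξ_ν, λ̄_{ν+1} − η_{ν+1}) is nonempty for all ν ≥ ν₀. -/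

import Mathlib

/-!
Writing `s_ν = (1/(64r⁴) + λ̄_ν/(4r²))^{1/2}`, the constants `±1/(8r²)` in `ξ_ν` and `η_{ν+1}` cancel,
so the inequality says `s_ν + s_{ν+1} ≤ (2/3)(λ̄_{ν+1} − λ̄_ν)`. The gap `λ̄_{ν+1} − λ̄_ν = (2ν + n − 1)/r²`
grows like `2ν/r²`, while `s_ν ≤ (ν + n + 1)/(2r²)`, so the left side grows only like `ν/r²`.
-/

noncomputable def sphereEigenvalue (n : ℕ) (r : ℝ) (ν : ℕ) : ℝ :=
  (ν : ℝ) * ((ν : ℝ) + (n : ℝ) - 2) / r ^ 2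

lemma sphereEigenvalue_succ_sub (n : ℕ) {r : ℝ} (hr : r ≠ 0) (ν : ℕ) :
    sphereEigenvalue n r (ν + 1) - sphereEigenvalue n r ν = (2 * ν + n - 1) / r ^ 2 := by
  unfold sphereEigenvalue
  push_cast
  field_simp
  ring

lemma sqrt_sphereEigenvalue_le (n : ℕ) {r : ℝ} (hr : r ≠ 0) (ν : ℕ) :
    Real.sqrt (1 / (64 * r ^ 4) + sphereEigenvalue n r ν / (4 * r ^ 2))
      ≤ ((ν : ℝ) + n + 1) / (2 * r ^ 2) := by
  have hradicand : 1 / (64 * r ^ 4) + sphereEigenvalue n r ν / (4 * r ^ 2)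
      = (1 / 16 + (ν : ℝ) * (ν + n - 2)) / (4 * r ^ 4) := by
    unfold sphereEigenvalue
    field_simp
    ring
  have hsq : (((ν : ℝ) + n + 1) / (2 * r ^ 2)) ^ 2 = ((ν : ℝ) + n + 1) ^ 2 / (4 * r ^ 4) := by
    ring
  refine Real.sqrt_le_iff.mpr ⟨by positivity, ?_⟩
  rw [hradicand, hsq]
  gcongr ?_ / _
  nlinarith [mul_nonneg (Nat.cast_nonneg ν : (0 : ℝ) ≤ ν) (Nat.cast_nonneg n : (0 : ℝ) ≤ n)]

lemma sqrt_add_sqrt_le_two_thirds_gap (n : ℕ) {r : ℝ} (hr : r ≠ 0) {ν : ℕ} (hν : n + 7 ≤ ν) :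
    Real.sqrt (1 / (64 * r ^ 4) + sphereEigenvalue n r ν / (4 * r ^ 2))
        + Real.sqrt (1 / (64 * r ^ 4) + sphereEigenvalue n r (ν + 1) / (4 * r ^ 2))
      ≤ 2 / 3 * (sphereEigenvalue n r (ν + 1) - sphereEigenvalue n r ν) := by
  have hν' : (n : ℝ) + 7 ≤ ν := by exact_mod_cast hν
  have hsum : ((ν : ℝ) + n + 1) / (2 * r ^ 2) + (((ν + 1 : ℕ) : ℝ) + n + 1) / (2 * r ^ 2)
      ≤ 2 / 3 * ((2 * ν + n - 1) / r ^ 2) :=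
    calc ((ν : ℝ) + n + 1) / (2 * r ^ 2) + (((ν + 1 : ℕ) : ℝ) + n + 1) / (2 * r ^ 2)
        = (ν + n + 3 / 2) / r ^ 2 := by push_cast; field_simp; ring
      _ ≤ 2 / 3 * (2 * ν + n - 1) / r ^ 2 := by gcongr; linarith
      _ = 2 / 3 * ((2 * ν + n - 1) / r ^ 2) := by ring
  rw [sphereEigenvalue_succ_sub n hr]
  linarith [sqrt_sphereEigenvalue_le n hr ν, sqrt_sphereEigenvalue_le n hr (ν + 1)]

theorem statement12_general (n : ℕ) (r : ℝ) (hr : 0 < r)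
    (lamb : ℕ → ℝ) (hlamb : ∀ ν : ℕ, lamb ν = (ν : ℝ) * ((ν : ℝ) + (n : ℝ) - 2) / r ^ 2)
    (ξ : ℕ → ℝ)
    (hξ : ∀ ν : ℕ, ξ ν = 1 / (8 * r ^ 2) + Real.sqrt (1 / (64 * r ^ 4) + lamb ν / (4 * r ^ 2)))
    (η : ℕ → ℝ)
    (hη : ∀ ν : ℕ, η ν = -(1 / (8 * r ^ 2)) + Real.sqrt (1 / (64 * r ^ 4) + lamb ν / (4 * r ^ 2))) :
    ∃ ν₀ : ℕ, ∀ ν : ℕ, ν₀ ≤ ν →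
      (1 / 3) * (lamb (ν + 1) - lamb ν) ≤ (lamb (ν + 1) - η (ν + 1)) - (lamb ν + ξ ν) ∧
        (Set.Ioo (lamb ν + ξ ν) (lamb (ν + 1) - η (ν + 1))).Nonempty := by
  obtain rfl : lamb = sphereEigenvalue n r := funext hlamb
  refine ⟨n + 7, fun ν hν => ?_⟩
  have hroots := sqrt_add_sqrt_le_two_thirds_gap n hr.ne' hν
  have hgap : 0 < sphereEigenvalue n r (ν + 1) - sphereEigenvalue n r ν := by
    rw [sphereEigenvalue_succ_sub n hr.ne']
    have : (n : ℝ) + 7 ≤ ν := by exact_mod_cast hν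
    exact div_pos (by linarith) (by positivity)
  rw [hξ, hη]
  exact ⟨by linarith, Set.nonempty_Ioo.mpr (by linarith)⟩

/-- For `n ≥ 2`, `r > 0`, `λ̄_ν := ν(ν + n − 2)/r²`,
`ξ_ν := 1/(8r²) + (1/(64r⁴) + λ̄_ν/(4r²))^{1/2}` and
`η_ν := −1/(8r²) + (1/(64r⁴) + λ̄_ν/(4r²))^{1/2}`, there exists `ν₀ ∈ ℕ` such that for all
`ν ≥ ν₀`, `(λ̄_{ν+1} − η_{ν+1}) − (λ̄_ν + ξ_ν) ≥ (1/3)(λ̄_{ν+1} − λ̄_ν)`; in particular the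
open interval `I_ν := (λ̄_ν + ξ_ν, λ̄_{ν+1} − η_{ν+1})` is nonempty for all `ν ≥ ν₀`. -/
theorem statement12 (n : ℕ) (hn : 2 ≤ n) (r : ℝ) (hr : 0 < r)
    (lamb : ℕ → ℝ) (hlamb : ∀ ν : ℕ, lamb ν = (ν : ℝ) * ((ν : ℝ) + (n : ℝ) - 2) / r ^ 2)
    (ξ : ℕ → ℝ)
    (hξ : ∀ ν : ℕ, ξ ν = 1 / (8 * r ^ 2) + Real.sqrt (1 / (64 * r ^ 4) + lamb ν / (4 * r ^ 2)))
    (η : ℕ → ℝ)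
    (hη : ∀ ν : ℕ, η ν = -(1 / (8 * r ^ 2)) + Real.sqrt (1 / (64 * r ^ 4) + lamb ν / (4 * r ^ 2))) :
    ∃ ν₀ : ℕ, ∀ ν : ℕ, ν₀ ≤ ν →
      (1 / 3) * (lamb (ν + 1) - lamb ν) ≤ (lamb (ν + 1) - η (ν + 1)) - (lamb ν + ξ ν) ∧
        (Set.Ioo (lamb ν + ξ ν) (lamb (ν + 1) - η (ν + 1))).Nonempty :=
  statement12_general n r hr lamb hlamb ξ hξ η hη
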